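/- Let Γ be an even Artin graph, A ⊆ V, and let P be a subgroup of G_Γ contained in G_A and contained in some conjugate hG_Bh^{-1} with B ⊆ V, h ∈ G_Γ. Then P is contained in aG_{A∩B}a^{-1} for some a ∈ G_A; in particular P ⊆ ρ_A(h)·G_{A∩B}·ρ_A(h)^{-1}. -/

import Mathlib

/-- An Artin graph: a simplicial graph with even/arbitrary labels; `m u v = 0`
means `u` and `v` are not joined by an edge, otherwise `m u v ≥ 2` is the label. -/
structure ArtinGraph (V : Type) where
  m : V → V → ℕ
  symm : ∀ u v, m u v = m v u
  loopless : ∀ v, m v v = 0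
  ne_one : ∀ u v, m u v ≠ 1

namespace ArtinGraph

variable {V : Type}

/-- `word u v n` is the prefix of length `n` of the alternating word `uvuv…`. -/
def word : V → V → ℕ → FreeGroup V
  | _, _, 0 => 1
  | u, v, n + 1 => FreeGroup.of u * word v u n

/-- The Artin relations of the graph. -/
def rels (Γ : ArtinGraph V) : Set (FreeGroup V) :=
  {r | ∃ u v, Γ.m u v ≠ 0 ∧ r = word u v (Γ.m u v) * (word v u (Γ.m u v))⁻¹}

/-- The Artin group of an Artin graph. -/
def ArtinGroup (Γ : ArtinGraph V) : Type := PresentedGroup Γ.rels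

instance (Γ : ArtinGraph V) : Group Γ.ArtinGroup :=
  inferInstanceAs (Group (PresentedGroup Γ.rels))

/-- The generator of the Artin group corresponding to a vertex. -/
def gen (Γ : ArtinGraph V) (v : V) : Γ.ArtinGroup := PresentedGroup.of v

/-- The standard parabolic subgroup on a set `S` of vertices. -/
def std (Γ : ArtinGraph V) (S : Set V) : Subgroup Γ.ArtinGroup :=
  Subgroup.closure (Γ.gen '' S)

/-- The conjugate `g H g⁻¹` of a subgroup. -/
def conjP {G : Type*} [Group G] (g : G) (H : Subgroup G) : Subgroup G :=
  H.map (MulAut.conj g).toMonoidHom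

/-- A parabolic subgroup is a conjugate of a standard parabolic subgroup. -/
def IsParabolic (Γ : ArtinGraph V) (P : Subgroup Γ.ArtinGroup) : Prop :=
  ∃ (S : Set V) (g : Γ.ArtinGroup), P = conjP g (Γ.std S)

/-- An Artin graph is even if all labels are even. -/
def IsEven (Γ : ArtinGraph V) : Prop := ∀ u v, Even (Γ.m u v)

/-- The FC condition for even Artin graphs: in every triangle at least two of
the three labels are equal to `2`. -/
def IsFC (Γ : ArtinGraph V) : Prop :=
  ∀ u v w, Γ.m u v ≠ 0 → Γ.m v w ≠ 0 → Γ.m w u ≠ 0 →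
    (Γ.m u v = 2 ∧ Γ.m v w = 2) ∨ (Γ.m v w = 2 ∧ Γ.m w u = 2) ∨
      (Γ.m u v = 2 ∧ Γ.m w u = 2)

/-- The link of a vertex. -/
def lk (Γ : ArtinGraph V) (x : V) : Set V := {u | Γ.m x u ≠ 0}

/-- The star of a vertex. -/
def star (Γ : ArtinGraph V) (x : V) : Set V := insert x (Γ.lk x)

end ArtinGraph

namespace ArtinGraph

variable {V : Type}

lemma word_two_mul (u v : V) (k : ℕ) :
    word u v (2 * k) = (FreeGroup.of u * FreeGroup.of v) ^ k := by
  induction k with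
  | zero => rfl
  | succ k ih => rw [Nat.mul_succ, pow_succ', ← ih, mul_assoc]; rfl

lemma map_conjP {G H : Type*} [Group G] [Group H] (f : G →* H) (g : G) (K : Subgroup G) :
    (conjP g K).map f = conjP (f g) (K.map f) := by
  simp only [conjP, Subgroup.map_map]
  congr 1
  ext x
  simp

variable (Γ : ArtinGraph V)

lemma std_univ : Γ.std Set.univ = ⊤ := by
  rw [std, Set.image_univ]
  exact PresentedGroup.closure_range_of Γ.rels

lemma mulIndicator_gen_mem_std_inter {A B : Set V} {v : V} (hv : v ∈ B) :
    A.mulIndicator Γ.gen v ∈ Γ.std (A ∩ B) := by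
  by_cases hvA : v ∈ A
  · rw [Set.mulIndicator_of_mem hvA]
    exact Subgroup.subset_closure ⟨v, ⟨hvA, hv⟩, rfl⟩
  · rw [Set.mulIndicator_of_notMem hvA]
    exact one_mem _

/-- In an even Artin group each relation reads `(uv)^k = (vu)^k`, which survives killing `u` or
`v`: this is why `ρ_A` is well defined. -/
lemma lift_mulIndicator_gen_of_mem_rels (hEven : Γ.IsEven) (A : Set V) :
    ∀ r ∈ Γ.rels, FreeGroup.lift (A.mulIndicator Γ.gen) r = 1 := by
  rintro r ⟨u, v, hm, rfl⟩
  have hrel := PresentedGroup.one_of_mem (show _ ∈ Γ.rels from ⟨u, v, hm, rfl⟩)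
  obtain ⟨k, hk⟩ := hEven u v
  rw [hk, ← two_mul, word_two_mul, word_two_mul] at hrel ⊢
  simp only [map_mul, map_inv, map_pow, FreeGroup.lift_apply_of] at hrel ⊢
  by_cases hu : u ∈ A
  · by_cases hv : v ∈ A
    · rw [Set.mulIndicator_of_mem hu, Set.mulIndicator_of_mem hv]
      exact hrel
    · simp [Set.mulIndicator_of_notMem hv]
  · simp [Set.mulIndicator_of_notMem hu]

/-- The retraction `ρ_A : G_Γ → G_A`, viewed as an endomorphism of `G_Γ`. -/
noncomputable def retraction (hEven : Γ.IsEven) (A : Set V) : Γ.ArtinGroup →* Γ.ArtinGroup :=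
  PresentedGroup.toGroup (Γ.lift_mulIndicator_gen_of_mem_rels hEven A)

lemma retraction_gen (hEven : Γ.IsEven) (A : Set V) (v : V) :
    Γ.retraction hEven A (Γ.gen v) = A.mulIndicator Γ.gen v :=
  PresentedGroup.toGroup.of _

section Retraction

variable {Γ} {A : Set V} {ρ : Γ.ArtinGroup →* Γ.ArtinGroup}

lemma map_std_le_std_inter (hρ : ∀ v, ρ (Γ.gen v) = A.mulIndicator Γ.gen v) (B : Set V) :
    (Γ.std B).map ρ ≤ Γ.std (A ∩ B) := by
  rw [std, MonoidHom.map_closure, Subgroup.closure_le]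
  rintro _ ⟨_, ⟨v, hv, rfl⟩, rfl⟩
  rw [hρ]
  exact Γ.mulIndicator_gen_mem_std_inter hv

lemma range_le_std (hρ : ∀ v, ρ (Γ.gen v) = A.mulIndicator Γ.gen v) :
    ρ.range ≤ Γ.std A := by
  rw [MonoidHom.range_eq_map, ← std_univ, ← Set.inter_univ A]
  exact map_std_le_std_inter hρ _

lemma eqOn_std (hρ : ∀ v, ρ (Γ.gen v) = A.mulIndicator Γ.gen v) :
    Set.EqOn ρ (MonoidHom.id _) (Γ.std A) :=
  MonoidHom.eqOn_closure <| by
    rintro _ ⟨v, hv, rfl⟩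
    rw [hρ, Set.mulIndicator_of_mem hv, MonoidHom.id_apply]

/-- Since `ρ` fixes `P ≤ G_A`, applying it to `P ≤ hG_Bh⁻¹` gives
`P ≤ ρ(h) ρ(G_B) ρ(h)⁻¹ ≤ ρ(h) G_{A∩B} ρ(h)⁻¹`. -/
lemma le_conjP_std_inter (hρ : ∀ v, ρ (Γ.gen v) = A.mulIndicator Γ.gen v)
    {P : Subgroup Γ.ArtinGroup} {B : Set V} {h : Γ.ArtinGroup}
    (hPA : P ≤ Γ.std A) (hPB : P ≤ conjP h (Γ.std B)) :
    P ≤ conjP (ρ h) (Γ.std (A ∩ B)) := by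
  intro p hp
  have hp' : ρ p ∈ (conjP h (Γ.std B)).map ρ := Subgroup.mem_map_of_mem ρ (hPB hp)
  rw [eqOn_std hρ (hPA hp), map_conjP] at hp'
  exact Subgroup.map_mono (map_std_le_std_inter hρ B) hp'

end Retraction

end ArtinGraph

open ArtinGraph in
/-- in an even Artin group, if `P ≤ G_A` and `P ≤ hG_Bh⁻¹`, then
`P ≤ aG_{A∩B}a⁻¹` for some `a ∈ G_A`; in particular, for the canonical
retraction `ρ_A` one has `P ≤ ρ_A(h)·G_{A∩B}·ρ_A(h)⁻¹`. -/
theorem stmt19 {V : Type} (Γ : ArtinGraph V) (hEven : Γ.IsEven) (A B : Set V)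
    (P : Subgroup Γ.ArtinGroup) (h : Γ.ArtinGroup)
    (hPA : P ≤ Γ.std A) (hPB : P ≤ conjP h (Γ.std B)) :
    (∃ a ∈ Γ.std A, P ≤ conjP a (Γ.std (A ∩ B))) ∧
      ∀ ρA : Γ.ArtinGroup →* Γ.ArtinGroup,
        (∀ g, ρA g ∈ Γ.std A) → (∀ s ∈ A, ρA (Γ.gen s) = Γ.gen s) →
        (∀ v ∉ A, ρA (Γ.gen v) = 1) →
        P ≤ conjP (ρA h) (Γ.std (A ∩ B)) := by
  have hρA : ∀ v, Γ.retraction hEven A (Γ.gen v) = A.mulIndicator Γ.gen v :=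
    Γ.retraction_gen hEven A
  refine ⟨⟨Γ.retraction hEven A h, range_le_std hρA ⟨h, rfl⟩,
    le_conjP_std_inter hρA hPA hPB⟩, ?_⟩
  intro ρA _ hfix hkill
  refine le_conjP_std_inter (fun v => ?_) hPA hPB
  by_cases hv : v ∈ A
  · rw [hfix v hv, Set.mulIndicator_of_mem hv]
  · rw [hkill v hv, Set.mulIndicator_of_notMem hv]
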